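/- For every k ≥ 1, the total number of up steps in all dispersed Dyck paths of length 2k+1 equals twice the total number of up steps in all dispersed Dyck paths of length 2k; that is, U(2k+1) = 2·U(2k). -/

import Mathlib

inductive DStep | up | down | right
deriving DecidableEq, Repr

instance : Fintype DStep :=
  ⟨{DStep.up, DStep.down, DStep.right}, fun x => by cases x <;> simp⟩

/-- Run a dispersed Dyck path from height `h`; `none` if an illegal step occurs,
otherwise the final height. Down steps require positive height; right steps require height 0. -/
def DStep.run : ℕ → List DStep → Option ℕ
  | h, [] => some h
  | h, .up :: l => DStep.run (h + 1) l
  | h + 1, .down :: l => DStep.run h l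
  | 0, .down :: _ => none
  | 0, .right :: l => DStep.run 0 l
  | _ + 1, .right :: _ => none

/-- A dispersed Dyck path: starts and ends at height 0, all steps legal. -/
def IsDDP (l : List DStep) : Prop := DStep.run 0 l = some 0

instance : DecidablePred IsDDP := fun l => by unfold IsDDP; infer_instance

/-- The finset of all dispersed Dyck paths of length `n`. -/
def DDPs (n : ℕ) : Finset (List.Vector DStep n) :=
  Finset.univ.filter (fun v => IsDDP v.toList)

/-- Number of dispersed Dyck paths of length `n`. -/
def dD (n : ℕ) : ℕ := (DDPs n).card

/-- Total number of up steps over all DDPs of length `n`. -/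
def U (n : ℕ) : ℕ := ∑ v ∈ DDPs n, v.toList.count DStep.up

/-- Total number of down steps over all DDPs of length `n`. -/
def D (n : ℕ) : ℕ := ∑ v ∈ DDPs n, v.toList.count DStep.down

/-- Total number of right steps over all DDPs of length `n`. -/
def R (n : ℕ) : ℕ := ∑ v ∈ DDPs n, v.toList.count DStep.right

/-- `i` is the position of a 1-ascent in `l`: an up step with no adjacent up step. -/
def IsOneAscentAt (l : List DStep) (i : ℕ) : Prop :=
  l[i]? = some .up ∧ l[i + 1]? ≠ some .up ∧ (i = 0 ∨ l[i - 1]? ≠ some .up)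

instance (l : List DStep) : DecidablePred (IsOneAscentAt l) := fun i => by
  unfold IsOneAscentAt; infer_instance

/-- Number of 1-ascents in `l`. -/
def oneAsc (l : List DStep) : ℕ :=
  ((Finset.range l.length).filter (IsOneAscentAt l)).card

/-- Total number of 1-ascents over all DDPs of length `n`. -/
def A (n : ℕ) : ℕ := ∑ v ∈ DDPs n, oneAsc v.toList

/-- Signed final height of a plain path (ignoring any right steps). -/
def psum : List DStep → ℤ
  | [] => 0
  | .up :: l => 1 + psum l
  | .down :: l => -1 + psum l
  | .right :: l => psum l

/-
Counting the legal words of length `n` from height `h` back to `0` by their first step gives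
Pascal-type recursions in `n`, so their number is `n.choose ((n + h + 1) / 2)` and their total
number of up steps satisfies `upTotal n h + 2 ^ n = j * n.choose j + ∑ t < j, n.choose t` with
`j = (n + h + 3) / 2`. At `h = 0`, Pascal's rule and `(j + 1) * n.choose (j + 1) =
(n - j) * n.choose j` relate the right-hand sides for `n = 2k + 1` and `n = 2k`, giving
`U (2k + 1) + 2 ^ (2k + 1) = 2 * (U (2k) + 2 ^ (2k))`.
-/

open Finset

theorem List.Vector.sum_univ_succ {α M : Type*} [Fintype α] [AddCommMonoid M] {n : ℕ}
    (f : List.Vector α (n + 1) → M) : ∑ v, f v = ∑ a, ∑ w : List.Vector α n, f (a ::ᵥ w) := by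
  rw [← Fintype.sum_prod_type']
  exact Fintype.sum_equiv
    ⟨fun v => (v.head, v.tail), fun p => p.1 ::ᵥ p.2, fun v => by simp, fun p => by simp⟩
    _ _ (fun v => by simp)

theorem DStep.sum_univ {M : Type*} [AddCommMonoid M] (f : DStep → M) :
    ∑ s, f s = f .up + f .down + f .right := by
  rw [show (univ : Finset DStep) = {.up, .down, .right} from rfl,
    sum_insert (by decide), sum_insert (by decide), sum_singleton, add_assoc]

theorem DStep.run_nil (h : ℕ) : DStep.run h [] = some h := by
  cases h <;> rfl

def pathsFrom (n h : ℕ) : Finset (List.Vector DStep n) :=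
  univ.filter fun v => DStep.run h v.toList = some 0

section PathSums

variable {M : Type*} [AddCommMonoid M] (g : List DStep → M) (n h : ℕ)

theorem sum_pathsFrom_zero :
    ∑ v ∈ pathsFrom 0 h, g v.toList = if h = 0 then g [] else 0 := by
  rw [pathsFrom, sum_filter, show (univ : Finset (List.Vector DStep 0)) = {.nil} from
    eq_singleton_iff_unique_mem.2 ⟨mem_univ _, fun v _ => v.eq_nil⟩, sum_singleton]
  simp [DStep.run_nil]

theorem sum_pathsFrom_succ_zero :
    ∑ v ∈ pathsFrom (n + 1) 0, g v.toList =
      ∑ w ∈ pathsFrom n 1, g (.up :: w.toList) + ∑ w ∈ pathsFrom n 0, g (.right :: w.toList) := by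
  simp only [pathsFrom, sum_filter, List.Vector.sum_univ_succ, DStep.sum_univ,
    List.Vector.toList_cons, DStep.run, reduceCtorEq, if_false, sum_const_zero, add_zero]
  rfl

theorem sum_pathsFrom_succ_succ :
    ∑ v ∈ pathsFrom (n + 1) (h + 1), g v.toList =
      ∑ w ∈ pathsFrom n (h + 2), g (.up :: w.toList) + ∑ w ∈ pathsFrom n h, g (.down :: w.toList) := by
  simp only [pathsFrom, sum_filter, List.Vector.sum_univ_succ, DStep.sum_univ,
    List.Vector.toList_cons, DStep.run, reduceCtorEq, if_false, sum_const_zero, add_zero]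
  rfl

end PathSums

def pathCount (n h : ℕ) : ℕ := #(pathsFrom n h)

def upTotal (n h : ℕ) : ℕ := ∑ v ∈ pathsFrom n h, v.toList.count .up

theorem pathCount_zero (h : ℕ) : pathCount 0 h = if h = 0 then 1 else 0 := by
  rw [pathCount, card_eq_sum_ones, sum_pathsFrom_zero (fun _ => 1)]

theorem pathCount_succ_zero (n : ℕ) : pathCount (n + 1) 0 = pathCount n 1 + pathCount n 0 := by
  simp only [pathCount, card_eq_sum_ones, sum_pathsFrom_succ_zero (fun _ => 1)]

theorem pathCount_succ_succ (n h : ℕ) :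
    pathCount (n + 1) (h + 1) = pathCount n (h + 2) + pathCount n h := by
  simp only [pathCount, card_eq_sum_ones, sum_pathsFrom_succ_succ (fun _ => 1)]

theorem upTotal_zero (h : ℕ) : upTotal 0 h = 0 := by
  simp [upTotal]

theorem upTotal_succ_zero (n : ℕ) :
    upTotal (n + 1) 0 = upTotal n 1 + pathCount n 1 + upTotal n 0 := by
  simp [upTotal, pathCount, sum_pathsFrom_succ_zero, sum_add_distrib]

theorem upTotal_succ_succ (n h : ℕ) :
    upTotal (n + 1) (h + 1) = upTotal n (h + 2) + pathCount n (h + 2) + upTotal n h := by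
  simp [upTotal, pathCount, sum_pathsFrom_succ_succ, sum_add_distrib]

theorem Nat.choose_succ_div_two (n : ℕ) :
    (n + 1).choose ((n + 2) / 2) = n.choose ((n + 1) / 2) + n.choose ((n + 2) / 2) := by
  obtain ⟨a, rfl | rfl⟩ := n.even_or_odd'
  · rw [show (2 * a + 2) / 2 = a + 1 by omega, show (2 * a + 1) / 2 = a by omega,
      Nat.choose_succ_succ']
  · rw [show (2 * a + 1 + 2) / 2 = a + 1 by omega, show (2 * a + 1 + 1) / 2 = a + 1 by omega,
      Nat.choose_succ_succ', Nat.choose_symm_half]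

-- Since `n.choose k = 0` for `k > n`, this also covers the heights `h > n`, from which no path returns.
theorem pathCount_eq_choose (n h : ℕ) : pathCount n h = n.choose ((n + h + 1) / 2) := by
  induction n generalizing h with
  | zero =>
    rcases h with _ | h
    · rfl
    · rw [pathCount_zero, if_neg h.succ_ne_zero, Nat.choose_eq_zero_of_lt (by omega)]
  | succ n ih =>
    rcases h with _ | h
    · rw [pathCount_succ_zero, ih, ih, show n + 1 + 1 = n + 2 by omega,
        Nat.choose_succ_div_two, add_comm]
    · rw [pathCount_succ_succ, ih, ih, show (n + (h + 2) + 1) / 2 = (n + h + 1) / 2 + 1 by omega,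
        show (n + 1 + (h + 1) + 1) / 2 = (n + h + 1) / 2 + 1 by omega, Nat.choose_succ_succ',
        add_comm]

def binomWeight (n j : ℕ) : ℕ := j * n.choose j + ∑ t ∈ range j, n.choose t

theorem binomWeight_succ_succ (n j : ℕ) :
    binomWeight (n + 1) (j + 1) = binomWeight n (j + 1) + binomWeight n j + n.choose j := by
  rw [binomWeight, binomWeight, binomWeight, sum_range_succ' (fun t => (n + 1).choose t),
    sum_range_succ' (fun t => n.choose t)]
  simp only [Nat.choose_succ_succ', Nat.choose_zero_right, sum_add_distrib]
  ring

theorem binomWeight_succ_add (n j : ℕ) :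
    binomWeight n (j + 1) + 2 * j * n.choose j = binomWeight n j + (n + 1) * n.choose j := by
  rw [binomWeight, binomWeight, sum_range_succ]
  rcases le_or_gt j n with hjn | hnj
  · obtain ⟨d, rfl⟩ := Nat.exists_eq_add_of_le hjn
    have h := Nat.choose_succ_right_eq (j + d) j
    rw [Nat.add_sub_cancel_left] at h
    linarith
  · simp [Nat.choose_eq_zero_of_lt hnj, Nat.choose_eq_zero_of_lt (hnj.trans j.lt_succ_self)]

theorem binomWeight_div_two (n : ℕ) : binomWeight n ((n + 3) / 2) = binomWeight n ((n + 2) / 2) := by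
  obtain ⟨a, rfl | rfl⟩ := n.even_or_odd'
  · rw [show (2 * a + 3) / 2 = (2 * a + 2) / 2 by omega]
  · have h := binomWeight_succ_add (2 * a + 1) (a + 1)
    rw [show (2 * a + 1 + 3) / 2 = a + 2 by omega, show (2 * a + 1 + 2) / 2 = a + 1 by omega]
    linarith

theorem upTotal_add_two_pow (n h : ℕ) : upTotal n h + 2 ^ n = binomWeight n ((n + h + 3) / 2) := by
  induction n generalizing h with
  | zero =>
    obtain ⟨m, hm⟩ : ∃ m, (0 + h + 3) / 2 = m + 1 := ⟨(h + 1) / 2, by omega⟩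
    rw [upTotal_zero, hm, binomWeight, sum_range_succ']
    simp
  | succ n ih =>
    rcases h with _ | h
    · have h1 := ih 1
      have h0 := ih 0
      rw [upTotal_succ_zero, pathCount_eq_choose, pow_succ,
        show (n + 1 + 0 + 3) / 2 = (n + 2) / 2 + 1 by omega, binomWeight_succ_succ,
        ← binomWeight_div_two, ← h0, show (n + 2) / 2 + 1 = (n + 1 + 3) / 2 by omega, ← h1]
      ring
    · have h2 := ih (h + 2)
      have h0 := ih h
      rw [upTotal_succ_succ, pathCount_eq_choose, pow_succ,
        show (n + 1 + (h + 1) + 3) / 2 = (n + h + 3) / 2 + 1 by omega, binomWeight_succ_succ,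
        ← h0, show (n + h + 3) / 2 + 1 = (n + (h + 2) + 3) / 2 by omega, ← h2,
        show (n + (h + 2) + 1) / 2 = (n + h + 3) / 2 by omega]
      ring

theorem U_eq_upTotal (n : ℕ) : U n = upTotal n 0 := rfl

theorem up_up_recursion_general (k : ℕ) : U (2 * k + 1) = 2 * U (2 * k) := by
  have hodd := upTotal_add_two_pow (2 * k + 1) 0
  have heven := upTotal_add_two_pow (2 * k) 0
  have hstep := binomWeight_succ_add (2 * k) (k + 1)
  rw [show (2 * k + 1 + 0 + 3) / 2 = k + 1 + 1 by omega, binomWeight_succ_succ, pow_succ] at hodd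
  rw [show (2 * k + 0 + 3) / 2 = k + 1 by omega] at heven
  rw [U_eq_upTotal, U_eq_upTotal]
  linarith

/-- For `k ≥ 1`, the total number of up steps in all DDPs of length `2k + 1` is twice
the total number of up steps in all DDPs of length `2k`. -/
theorem up_up_recursion (k : ℕ) (hk : 1 ≤ k) : U (2 * k + 1) = 2 * U (2 * k) :=
  up_up_recursion_general k
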